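/- arXiv:2502.20515 — 3 statements merged into one kernel-verified Lean document; each statement's English description precedes it below -/
import Mathlib

section
/- Let C be a Möbius category, i.e. a small category such that for every morphism f : x → y, the category C_f of factorizations x → z → y of f is equivalent to a finite partially ordered set. Then given morphisms f : x → z, h₁, h₂ : z → w, g : w → y with h₁ ∘ f = h₂ ∘ f and g ∘ h₁ = g ∘ h₂, one has h₁ = h₂. -/
open CategoryTheory

/-- A *Möbius category* is a small category `C` such that for every morphism `f : x ⟶ y`,
the category `Factorisation f` of factorizations `x → z → y` of `f` is equivalent to a
finite partially ordered set. -/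
def IsMobiusCategory (C : Type*) [Category C] : Prop :=
  ∀ ⦃x y : C⦄ (f : x ⟶ y), ∃ P : FinPartOrd.{0}, Nonempty (Factorisation f ≌ ↥P)

/-- In a Möbius category, given `f : x ⟶ z`, `h₁ h₂ : z ⟶ w`, `g : w ⟶ y` with
`h₁ ∘ f = h₂ ∘ f` and `g ∘ h₁ = g ∘ h₂`, one has `h₁ = h₂`. -/
theorem mobius_cancel {C : Type*} [Category C] (hC : IsMobiusCategory C)
    {x z w y : C} (f : x ⟶ z) (h₁ h₂ : z ⟶ w) (g : w ⟶ y)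
    (hf : f ≫ h₁ = f ≫ h₂) (hg : h₁ ≫ g = h₂ ≫ g) : h₁ = h₂ := by
  obtain ⟨P, ⟨e⟩⟩ := hC (f ≫ h₁ ≫ g)
  let A : Factorisation (f ≫ h₁ ≫ g) := ⟨z, f, h₁ ≫ g, rfl⟩
  let B : Factorisation (f ≫ h₁ ≫ g) := ⟨w, f ≫ h₁, g, by simp⟩
  let m₁ : A ⟶ B := ⟨h₁, rfl, rfl⟩
  let m₂ : A ⟶ B := ⟨h₂, hf.symm, hg.symm⟩
  have key : m₁ = m₂ := e.functor.map_injective (Subsingleton.elim _ _)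
  exact congrArg Factorisation.Hom.h key
end

section
/- Let C be a Möbius category. If f : x → z and g : z → y are morphisms in C such that the composition g ∘ f is an isomorphism, then both f and g are isomorphisms. -/
open CategoryTheory

/-- In a Möbius category, if a composition `f ≫ g` is an isomorphism, then both `f` and `g`
are isomorphisms. -/
theorem mobius_isIso_of_comp_isIso {C : Type*} [Category C] (hC : IsMobiusCategory C)
    {x z y : C} (f : x ⟶ z) (g : z ⟶ y) (h : IsIso (f ≫ g)) :
    IsIso f ∧ IsIso g := by
  obtain ⟨P, ⟨E⟩⟩ := hC (f ≫ g)
  set hfg := f ≫ g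
  -- two objects of the factorisation category
  let A : Factorisation hfg := ⟨x, 𝟙 x, hfg, by simp⟩
  let B : Factorisation hfg := ⟨z, f, g, rfl⟩
  let u : A ⟶ B := ⟨f, by simp [A, B], rfl⟩
  let v : B ⟶ A := ⟨g ≫ inv hfg, by rw [← Category.assoc]; simp [A, B, hfg], by simp [A, B]⟩
  -- Factorisation hfg is thin, since P is a partial order
  have thin : ∀ (D : Factorisation hfg) (p q : D ⟶ D), p = q := by
    intro D p q
    apply E.functor.map_injective
    apply Subsingleton.elim
  have h1 : u ≫ v = 𝟙 A := thin A (u ≫ v) (𝟙 A)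
  have h2 : v ≫ u = 𝟙 B := thin B (v ≫ u) (𝟙 B)
  have e1 : f ≫ (g ≫ inv hfg) = 𝟙 x := congrArg Factorisation.Hom.h h1
  have e2 : (g ≫ inv hfg) ≫ f = 𝟙 z := congrArg Factorisation.Hom.h h2
  have hf : IsIso f := ⟨g ≫ inv hfg, e1, e2⟩
  refine ⟨hf, ?_⟩
  have : g = inv f ≫ hfg := by simp [hfg]
  rw [this]
  infer_instance
end

section
/- Let C be a Möbius category and A a commutative ring. The subset U(C; A) ⊂ A⟦C⟧ of elements μ with μ(f) = 1 for all isomorphisms f is closed under Möbius convolution, and every element of U(C; A) has a two-sided convolution inverse lying in U(C; A), so that U(C; A) forms a group under Möbius convolution with unit δ. -/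
open CategoryTheory

/-- A function on the morphisms of `C` descends to isomorphism classes of morphisms
(objects of the arrow category) iff it is invariant under isomorphisms of arrows.
Such invariant functions are exactly the elements of the Möbius algebra `A⟦C⟧`. -/
def ArrowInvariant {C : Type*} [Category C] {A : Type*}
    (μ : ∀ ⦃x y : C⦄, (x ⟶ y) → A) : Prop :=
  ∀ ⦃x y x' y' : C⦄ (f : x ⟶ y) (f' : x' ⟶ y') (ex : x ≅ x') (ey : y ≅ y'),
    f ≫ ey.hom = ex.hom ≫ f' → μ f = μ f'

/-- Isomorphism relation on the factorization category `C_f`. -/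
def FactIsoRel {C : Type*} [Category C] {x y : C} (f : x ⟶ y) :
    Factorisation f → Factorisation f → Prop :=
  fun F G => Nonempty (F ≅ G)

/-- The Möbius convolution `(μ * ν)(f) = ∑_{f = h ∘ g} μ(g) · ν(h)`, the sum running over the
isomorphism classes of factorizations of `f` (the elements of the poset `C_f`); for each class
a representative is chosen by `Quot.out`. -/
noncomputable def mobiusConv {C : Type*} [Category C] {A : Type*} [CommRing A]
    (μ ν : ∀ ⦃x y : C⦄, (x ⟶ y) → A) : ∀ ⦃x y : C⦄, (x ⟶ y) → A :=
  fun _ _ f => ∑ᶠ q : Quot (FactIsoRel f), μ (Quot.out q).ι * ν (Quot.out q).π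

open Classical in
/-- The convolution unit `δ`, taking value `1` on isomorphisms and `0` otherwise. -/
noncomputable def mobiusDelta (C : Type*) [Category C] (A : Type*) [CommRing A] :
    ∀ ⦃x y : C⦄, (x ⟶ y) → A :=
  fun _ _ f => if IsIso f then 1 else 0


namespace MobiusAux

variable {C : Type*} [Category C] {A : Type*} [CommRing A]

section Basic

variable {x y : C} {f : x ⟶ y}

lemma comp_h {F G H : Factorisation f} (u : F ⟶ G) (v : G ⟶ H) :
    (u ≫ v).h = u.h ≫ v.h := rfl

lemma id_h (F : Factorisation f) : (𝟙 F : F ⟶ F).h = 𝟙 F.mid := rfl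

/-- Thinness of the factorisation category of a Möbius category. -/
theorem thin (hC : IsMobiusCategory C) {F G : Factorisation f} (u v : F ⟶ G) : u = v := by
  obtain ⟨P, ⟨E⟩⟩ := hC f
  exact E.functor.map_injective (Subsingleton.elim _ _)

/-- Two opposite morphisms in the factorisation category give an isomorphism. -/
def isoOfHoms (hC : IsMobiusCategory C) {F G : Factorisation f} (u : F ⟶ G) (v : G ⟶ F) :
    F ≅ G :=
  ⟨u, v, thin hC _ _, thin hC _ _⟩

/-- A morphism of factorisations whose underlying morphism is an isomorphism is an
isomorphism. -/
noncomputable def isoOfIsoH {F G : Factorisation f} (u : F ⟶ G) (hu : IsIso u.h) : F ≅ G where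
  hom := u
  inv := ⟨inv u.h, by
      rw [← u.ι_h]; simp, by
      rw [← u.h_π]; simp⟩
  hom_inv_id := by apply Factorisation.Hom.ext; simp [comp_h, id_h]
  inv_hom_id := by apply Factorisation.Hom.ext; simp [comp_h, id_h]

/-- The underlying isomorphism of midpoints of an isomorphism of factorisations. -/
def isoH {F G : Factorisation f} (e : F ≅ G) : F.mid ≅ G.mid where
  hom := e.hom.h
  inv := e.inv.h
  hom_inv_id := by rw [← comp_h, e.hom_inv_id, id_h]
  inv_hom_id := by rw [← comp_h, e.inv_hom_id, id_h]

lemma factIsoRel_equivalence : Equivalence (FactIsoRel f) where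
  refl F := ⟨Iso.refl F⟩
  symm := fun ⟨e⟩ => ⟨e.symm⟩
  trans := fun ⟨e⟩ ⟨e'⟩ => ⟨e.trans e'⟩

lemma rel_of_mk_eq {F G : Factorisation f}
    (h : Quot.mk (FactIsoRel f) F = Quot.mk (FactIsoRel f) G) : Nonempty (F ≅ G) :=
  factIsoRel_equivalence.eqvGen_iff.mp (Quot.eqvGen_exact h)

lemma out_iso (q : Quot (FactIsoRel f)) {F : Factorisation f}
    (h : Quot.mk (FactIsoRel f) F = q) : Nonempty (Quot.out q ≅ F) :=
  rel_of_mk_eq ((Quot.out_eq q).trans h.symm)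

lemma finiteQuot (hC : IsMobiusCategory C) (f : x ⟶ y) : Finite (Quot (FactIsoRel f)) := by
  obtain ⟨P, ⟨E⟩⟩ := hC f
  refine Finite.of_injective (fun q => E.functor.obj (Quot.out q)) ?_
  intro q q' h
  rw [← Quot.out_eq q, ← Quot.out_eq q']
  exact Quot.sound ⟨E.functor.preimageIso (eqToIso h)⟩

/-- The number of isomorphism classes of factorisations. -/
noncomputable def deg (f : x ⟶ y) : ℕ := Nat.card (Quot (FactIsoRel f))

lemma nonemptyQuot (f : x ⟶ y) : Nonempty (Quot (FactIsoRel f)) :=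
  ⟨Quot.mk _ (Factorisation.initial)⟩

lemma deg_pos (hC : IsMobiusCategory C) (f : x ⟶ y) : 0 < deg f := by
  haveI := finiteQuot hC f
  haveI := nonemptyQuot f
  exact Nat.card_pos

theorem splitMono_isIso (hC : IsMobiusCategory C) {z : C} (ι : x ⟶ z) (r : z ⟶ x)
    (w : ι ≫ r = 𝟙 x) : IsIso ι := by
  let F0 : Factorisation (𝟙 x) := ⟨x, 𝟙 x, 𝟙 x, by simp⟩
  let Fz : Factorisation (𝟙 x) := ⟨z, ι, r, w⟩
  let u : F0 ⟶ Fz := ⟨ι, by simp [F0, Fz], w⟩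
  let v : Fz ⟶ F0 := ⟨r, w, by simp [F0, Fz]⟩
  have h1 : u ≫ v = 𝟙 F0 := thin hC _ _
  have h2 : v ≫ u = 𝟙 Fz := thin hC _ _
  exact ⟨r, congrArg Factorisation.Hom.h h1, congrArg Factorisation.Hom.h h2⟩

theorem splitEpi_isIso (hC : IsMobiusCategory C) {z : C} (π : z ⟶ y) (s : y ⟶ z)
    (w : s ≫ π = 𝟙 y) : IsIso π := by
  let F0 : Factorisation (𝟙 y) := ⟨y, 𝟙 y, 𝟙 y, by simp⟩
  let Fz : Factorisation (𝟙 y) := ⟨z, s, π, w⟩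
  let u : Fz ⟶ F0 := ⟨π, w, by simp [F0, Fz]⟩
  let v : F0 ⟶ Fz := ⟨s, by simp [F0, Fz], w⟩
  have h1 : u ≫ v = 𝟙 Fz := thin hC _ _
  exact ⟨s, congrArg Factorisation.Hom.h h1, w⟩

end Basic

end MobiusAux
namespace MobiusAux

variable {C : Type*} [Category C] {A : Type*} [CommRing A]

section Init

variable {x y : C} {f : x ⟶ y}

/-- The class of the initial factorisation. -/
noncomputable def q0 (f : x ⟶ y) : Quot (FactIsoRel f) :=
  Quot.mk _ (Factorisation.initial)

/-- The class of the terminal factorisation. -/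
noncomputable def q1 (f : x ⟶ y) : Quot (FactIsoRel f) :=
  Quot.mk _ (Factorisation.terminal)

lemma mk_eq_q0_of_isIso_ι (hC : IsMobiusCategory C) (F : Factorisation f) (h : IsIso F.ι) :
    Quot.mk (FactIsoRel f) F = q0 f := by
  have v : F ⟶ (Factorisation.initial : Factorisation f) :=
    ⟨(inv F.ι : F.mid ⟶ x), IsIso.hom_inv_id F.ι, by
      show inv F.ι ≫ f = F.π
      rw [IsIso.inv_comp_eq]; exact F.ι_π.symm⟩
  exact Quot.sound ⟨isoOfHoms hC v (Factorisation.initialHom F)⟩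

lemma isIso_ι_of_mk_eq_q0 (F : Factorisation f) (h : Quot.mk (FactIsoRel f) F = q0 f) :
    IsIso F.ι := by
  obtain ⟨e⟩ := rel_of_mk_eq h
  have h1 : F.ι ≫ e.hom.h = 𝟙 x := by
    have := e.hom.ι_h; simpa using this
  have h2 : e.hom.h ≫ F.ι = 𝟙 F.mid := by
    have hinv : e.inv.h = F.ι := by have := e.inv.ι_h; exact (Category.id_comp _).symm.trans this
    have := congrArg Factorisation.Hom.h e.hom_inv_id
    rw [comp_h, id_h, hinv] at this
    exact this
  exact ⟨e.hom.h, h1, h2⟩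

lemma mk_eq_q1_of_isIso_π (hC : IsMobiusCategory C) (F : Factorisation f) (h : IsIso F.π) :
    Quot.mk (FactIsoRel f) F = q1 f := by
  have v : (Factorisation.terminal : Factorisation f) ⟶ F :=
    ⟨(inv F.π : y ⟶ F.mid), by
      show f ≫ inv F.π = F.ι
      rw [IsIso.comp_inv_eq]; exact F.ι_π.symm, IsIso.inv_hom_id F.π⟩
  exact Quot.sound ⟨isoOfHoms hC (Factorisation.terminalHom F) v⟩

lemma isIso_π_of_mk_eq_q1 (F : Factorisation f) (h : Quot.mk (FactIsoRel f) F = q1 f) :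
    IsIso F.π := by
  obtain ⟨e⟩ := rel_of_mk_eq h
  have h1 : e.hom.h = F.π := by have := e.hom.h_π; exact (Category.comp_id _).symm.trans this
  have h2 : e.inv.h ≫ F.π = 𝟙 y := by
    have := congrArg Factorisation.Hom.h e.inv_hom_id
    rw [comp_h, id_h, h1] at this; exact this
  have h3 : F.π ≫ e.inv.h = 𝟙 F.mid := by
    have := congrArg Factorisation.Hom.h e.hom_inv_id
    rw [comp_h, id_h, h1] at this; exact this
  exact ⟨e.inv.h, h3, h2⟩

lemma isIso_of_q0_eq_q1 (h : q0 f = q1 f) : IsIso f := by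
  obtain ⟨e⟩ := rel_of_mk_eq (f := f) h
  have h1 : e.hom.h = f := by have := e.hom.ι_h; exact (Category.id_comp _).symm.trans this
  have h2 : e.inv.h ≫ f = 𝟙 y := by
    have := congrArg Factorisation.Hom.h e.inv_hom_id
    rw [comp_h, id_h, h1] at this; exact this
  have h3 : f ≫ e.inv.h = 𝟙 x := by
    have := congrArg Factorisation.Hom.h e.hom_inv_id
    rw [comp_h, id_h, h1] at this; exact this
  exact ⟨e.inv.h, h3, h2⟩

lemma isIso_ι_of_isIso (hC : IsMobiusCategory C) (hf : IsIso f) (F : Factorisation f) :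
    IsIso F.ι := by
  refine splitMono_isIso hC F.ι (F.π ≫ inv f) ?_
  rw [← Category.assoc, F.ι_π]; simp

lemma isIso_π_of_isIso (hC : IsMobiusCategory C) (hf : IsIso f) (F : Factorisation f) :
    IsIso F.π := by
  refine splitEpi_isIso hC F.π (inv f ≫ F.ι) ?_
  rw [Category.assoc, F.ι_π]; simp

lemma subsingletonQuot (hC : IsMobiusCategory C) (hf : IsIso f) :
    Subsingleton (Quot (FactIsoRel f)) := by
  constructor
  refine Quot.ind fun F => Quot.ind fun G => ?_
  rw [mk_eq_q0_of_isIso_ι hC F (isIso_ι_of_isIso hC hf F),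
    mk_eq_q0_of_isIso_ι hC G (isIso_ι_of_isIso hC hf G)]

end Init

section Arrows

variable {x y x' y' : C} {f : x ⟶ y} {f' : x' ⟶ y'}

lemma inv_eq_of_arrowIso {μ : ∀ ⦃x y : C⦄, (x ⟶ y) → A} (hμ : ArrowInvariant μ)
    (e : Arrow.mk f ≅ Arrow.mk f') : μ f = μ f' := by
  refine hμ f f' (Arrow.leftFunc.mapIso e) (Arrow.rightFunc.mapIso e) ?_
  exact (Arrow.w e.hom).symm

lemma isIso_of_arrowIso (e : Arrow.mk f ≅ Arrow.mk f') (h : IsIso f) : IsIso f' := by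
  have hw : e.inv.left ≫ f ≫ e.hom.right = f' := by
    show e.inv.left ≫ (Arrow.mk f).hom ≫ e.hom.right = (Arrow.mk f').hom
    rw [← Arrow.w e.hom, ← Category.assoc, ← Arrow.comp_left, e.inv_hom_id]
    simp
  rw [← hw]
  have h1 : IsIso e.inv.left :=
    ⟨e.hom.left, by rw [← Arrow.comp_left, e.inv_hom_id]; simp,
      by rw [← Arrow.comp_left, e.hom_inv_id]; simp⟩
  have h2 : IsIso e.hom.right :=
    ⟨e.inv.right, by rw [← Arrow.comp_right, e.hom_inv_id]; simp,
      by rw [← Arrow.comp_right, e.inv_hom_id]; simp⟩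
  infer_instance

/-- The arrow isomorphism on `ι`-components induced by an isomorphism of factorisations. -/
noncomputable def arrowIsoι {F G : Factorisation f} (e : F ≅ G) :
    Arrow.mk F.ι ≅ Arrow.mk G.ι :=
  Arrow.isoMk (Iso.refl x) (isoH e) (by simp [isoH])

/-- The arrow isomorphism on `π`-components induced by an isomorphism of factorisations. -/
noncomputable def arrowIsoπ {F G : Factorisation f} (e : F ≅ G) :
    Arrow.mk F.π ≅ Arrow.mk G.π :=
  Arrow.isoMk (isoH e) (Iso.refl y) (by simp [isoH])

end Arrows

end MobiusAux
namespace MobiusAux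

variable {C : Type*} [Category C] {A : Type*} [CommRing A]

section Transport

variable {x y x' y' : C} {f : x ⟶ y} {f' : x' ⟶ y'}

/-- Transport of factorisations along an isomorphism of arrows. -/
@[simps]
def transObj (e : Arrow.mk f ≅ Arrow.mk f') (F : Factorisation f) : Factorisation f' where
  mid := F.mid
  ι := e.inv.left ≫ F.ι
  π := F.π ≫ e.hom.right
  ι_π := by
    have wmain : f ≫ e.hom.right = e.hom.left ≫ f' := (Arrow.w e.hom).symm
    have hinv : e.inv.left ≫ e.hom.left = 𝟙 x' := by
      rw [← Arrow.comp_left, e.inv_hom_id]; simp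
    rw [Category.assoc, ← Category.assoc F.ι, F.ι_π, wmain, ← Category.assoc, hinv]
    simp

lemma transObj_rel (e : Arrow.mk f ≅ Arrow.mk f') {F G : Factorisation f}
    (d : F ≅ G) : Nonempty (transObj e F ≅ transObj e G) :=
  ⟨isoOfIsoH ⟨d.hom.h, by
      simp only [transObj_ι]
      show (e.inv.left ≫ F.ι) ≫ d.hom.h = e.inv.left ≫ G.ι
      rw [Category.assoc, d.hom.ι_h], by
      simp only [transObj_π]
      show d.hom.h ≫ G.π ≫ e.hom.right = F.π ≫ e.hom.right
      rw [← Category.assoc, d.hom.h_π]⟩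
    ((isoH d).isIso_hom)⟩

/-- Transport of classes of factorisations along an isomorphism of arrows. -/
noncomputable def transQuot (e : Arrow.mk f ≅ Arrow.mk f') :
    Quot (FactIsoRel f) → Quot (FactIsoRel f') :=
  Quot.map (transObj e) (fun _ _ ⟨d⟩ => transObj_rel e d)

lemma transObj_symm_iso (e : Arrow.mk f ≅ Arrow.mk f') (F : Factorisation f) :
    Nonempty (transObj e.symm (transObj e F) ≅ F) := by
  refine ⟨isoOfIsoH ⟨𝟙 F.mid, ?_, ?_⟩ (IsIso.id F.mid)⟩
  · show (e.symm.inv.left ≫ e.inv.left ≫ F.ι) ≫ 𝟙 F.mid = F.ι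
    rw [Iso.symm_inv, ← Category.assoc, ← Arrow.comp_left, e.hom_inv_id]
    simp
  · show 𝟙 F.mid ≫ F.π = (F.π ≫ e.hom.right) ≫ e.symm.hom.right
    rw [Iso.symm_hom, Category.assoc, ← Arrow.comp_right, e.hom_inv_id]
    simp

/-- Equivalence of classes of factorisations along an isomorphism of arrows. -/
noncomputable def transEquiv (e : Arrow.mk f ≅ Arrow.mk f') :
    Quot (FactIsoRel f) ≃ Quot (FactIsoRel f') where
  toFun := transQuot e
  invFun := transQuot e.symm
  left_inv := by
    refine Quot.ind fun F => ?_
    exact Quot.sound (transObj_symm_iso e F)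
  right_inv := by
    refine Quot.ind fun F => ?_
    have : e.symm.symm = e := by simp
    refine Quot.sound ?_
    rw [show transObj e = transObj e.symm.symm by rw [this]]
    exact transObj_symm_iso e.symm F

lemma deg_arrowIso (e : Arrow.mk f ≅ Arrow.mk f') : deg f = deg f' :=
  Nat.card_congr (transEquiv e)

/-- Arrow isomorphism between `ι`s of a transported factorisation. -/
noncomputable def transArrowι (e : Arrow.mk f ≅ Arrow.mk f') (F : Factorisation f) :
    Arrow.mk F.ι ≅ Arrow.mk (transObj e F).ι :=
  Arrow.isoMk (Arrow.leftFunc.mapIso e) (Iso.refl F.mid) (by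
    show e.hom.left ≫ e.inv.left ≫ F.ι = F.ι ≫ 𝟙 F.mid
    rw [← Category.assoc, ← Arrow.comp_left, e.hom_inv_id]; simp)

/-- Arrow isomorphism between `π`s of a transported factorisation. -/
noncomputable def transArrowπ (e : Arrow.mk f ≅ Arrow.mk f') (F : Factorisation f) :
    Arrow.mk F.π ≅ Arrow.mk (transObj e F).π :=
  Arrow.isoMk (Iso.refl F.mid) (Arrow.rightFunc.mapIso e) (by
    show 𝟙 F.mid ≫ F.π ≫ e.hom.right = F.π ≫ e.hom.right
    simp)

end Transport

section Measure

variable {x y : C} {f : x ⟶ y}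

/-- Pushing a factorisation of `F.π` to a factorisation of `f`. -/
@[simps]
def pushπ (F : Factorisation f) (G : Factorisation F.π) : Factorisation f where
  mid := G.mid
  ι := F.ι ≫ G.ι
  π := G.π
  ι_π := by rw [Category.assoc, G.ι_π, F.ι_π]

/-- Pushing a factorisation of `F.ι` to a factorisation of `f`. -/
@[simps]
def pushι (F : Factorisation f) (G : Factorisation F.ι) : Factorisation f where
  mid := G.mid
  ι := G.ι
  π := G.π ≫ F.π
  ι_π := by rw [← Category.assoc, G.ι_π, F.ι_π]

lemma pushπ_rel (F : Factorisation f) {G G' : Factorisation F.π} (d : G ≅ G') :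
    Nonempty (pushπ F G ≅ pushπ F G') :=
  ⟨isoOfIsoH ⟨d.hom.h, by rw [pushπ_ι, pushπ_ι]; show (F.ι ≫ G.ι) ≫ d.hom.h = F.ι ≫ G'.ι; rw [Category.assoc, d.hom.ι_h],
    by rw [pushπ_π, pushπ_π]; show d.hom.h ≫ G'.π = G.π; rw [d.hom.h_π]⟩ ((isoH d).isIso_hom)⟩

lemma pushι_rel (F : Factorisation f) {G G' : Factorisation F.ι} (d : G ≅ G') :
    Nonempty (pushι F G ≅ pushι F G') :=
  ⟨isoOfIsoH ⟨d.hom.h, by rw [pushι_ι, pushι_ι]; show G.ι ≫ d.hom.h = G'.ι; rw [d.hom.ι_h],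
    by rw [pushι_π, pushι_π]; show d.hom.h ≫ G'.π ≫ F.π = G.π ≫ F.π; rw [← Category.assoc, d.hom.h_π]⟩ ((isoH d).isIso_hom)⟩

lemma deg_lt_of_not_isIso_ι (hC : IsMobiusCategory C) (F : Factorisation f)
    (h : ¬IsIso F.ι) : deg F.π < deg f := by
  haveI : Finite (Quot (FactIsoRel f)) := finiteQuot hC f
  haveI : Finite (Quot (FactIsoRel F.π)) := finiteQuot hC F.π
  -- the injection avoiding `q0 f`
  let j : Quot (FactIsoRel F.π) → Quot (FactIsoRel f) :=
    Quot.map (pushπ F) (fun _ _ ⟨d⟩ => pushπ_rel F d)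
  have hne : ∀ s, j s ≠ q0 f := by
    refine Quot.ind fun G hq => ?_
    have := isIso_ι_of_mk_eq_q0 (pushπ F G) hq
    rw [pushπ_ι] at this
    replace this : IsIso (F.ι ≫ G.ι) := this
    exact h (splitMono_isIso hC F.ι (G.ι ≫ inv (F.ι ≫ G.ι))
      (by rw [← Category.assoc]; simp))
  have hinj : Function.Injective j := by
    refine Quot.ind fun G => Quot.ind fun G' hq => ?_
    obtain ⟨e⟩ := rel_of_mk_eq hq
    let a : F ⟶ pushπ F G := ⟨G.ι, rfl, by rw [pushπ_π]; exact G.ι_π⟩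
    let a' : F ⟶ pushπ F G' := ⟨G'.ι, rfl, by rw [pushπ_π]; exact G'.ι_π⟩
    have key : a ≫ e.hom = a' := thin hC _ _
    have key_h : G.ι ≫ e.hom.h = G'.ι := congrArg Factorisation.Hom.h key
    refine Quot.sound ⟨isoOfIsoH ⟨e.hom.h, key_h, e.hom.h_π⟩ ((isoH e).isIso_hom)⟩
  -- conclude on cardinalities
  calc deg F.π = Nat.card (Quot (FactIsoRel F.π)) := rfl
    _ ≤ Nat.card {q : Quot (FactIsoRel f) // q ≠ q0 f} :=
        Nat.card_le_card_of_injective (fun s => ⟨j s, hne s⟩)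
          (fun s t hst => hinj (congrArg Subtype.val hst))
    _ < Nat.card (Quot (FactIsoRel f)) := Finite.card_subtype_lt (x := q0 f) (by simp)
    _ = deg f := rfl

lemma deg_lt_of_not_isIso_π (hC : IsMobiusCategory C) (F : Factorisation f)
    (h : ¬IsIso F.π) : deg F.ι < deg f := by
  haveI : Finite (Quot (FactIsoRel f)) := finiteQuot hC f
  haveI : Finite (Quot (FactIsoRel F.ι)) := finiteQuot hC F.ι
  let j : Quot (FactIsoRel F.ι) → Quot (FactIsoRel f) :=
    Quot.map (pushι F) (fun _ _ ⟨d⟩ => pushι_rel F d)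
  have hne : ∀ s, j s ≠ q1 f := by
    refine Quot.ind fun G hq => ?_
    have := isIso_π_of_mk_eq_q1 (pushι F G) hq
    rw [pushι_π] at this
    replace this : IsIso (G.π ≫ F.π) := this
    exact h (splitEpi_isIso hC F.π (inv (G.π ≫ F.π) ≫ G.π)
      (by rw [Category.assoc]; simp))
  have hinj : Function.Injective j := by
    refine Quot.ind fun G => Quot.ind fun G' hq => ?_
    obtain ⟨e⟩ := rel_of_mk_eq hq
    let b : pushι F G ⟶ F := ⟨G.π, by rw [pushι_ι]; exact G.ι_π, rfl⟩
    let b' : pushι F G' ⟶ F := ⟨G'.π, by rw [pushι_ι]; exact G'.ι_π, rfl⟩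
    have key : e.hom ≫ b' = b := thin hC _ _
    have key_h : e.hom.h ≫ G'.π = G.π := congrArg Factorisation.Hom.h key
    refine Quot.sound ⟨isoOfIsoH ⟨e.hom.h, e.hom.ι_h, key_h⟩ ((isoH e).isIso_hom)⟩
  calc deg F.ι = Nat.card (Quot (FactIsoRel F.ι)) := rfl
    _ ≤ Nat.card {q : Quot (FactIsoRel f) // q ≠ q1 f} :=
        Nat.card_le_card_of_injective (fun s => ⟨j s, hne s⟩)
          (fun s t hst => hinj (congrArg Subtype.val hst))
    _ < Nat.card (Quot (FactIsoRel f)) := Finite.card_subtype_lt (x := q1 f) (by simp)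
    _ = deg f := rfl

end Measure

end MobiusAux
namespace MobiusAux

variable {C : Type*} [Category C] {A : Type*} [CommRing A]

section Splits

variable {x y : C} {f : x ⟶ y} {μ ν : ∀ ⦃x y : C⦄, (x ⟶ y) → A}

lemma isIso_out_q0_ι : IsIso (Quot.out (q0 f)).ι :=
  isIso_ι_of_mk_eq_q0 _ (Quot.out_eq _)

lemma isIso_out_q1_π : IsIso (Quot.out (q1 f)).π :=
  isIso_π_of_mk_eq_q1 _ (Quot.out_eq _)

lemma out_q0_π_arrowIso : Nonempty (Arrow.mk (Quot.out (q0 f)).π ≅ Arrow.mk f) := by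
  obtain ⟨e⟩ := out_iso (q0 f) (rfl :
    Quot.mk (FactIsoRel f) (Factorisation.initial) = q0 f)
  exact ⟨arrowIsoπ e⟩

lemma out_q1_ι_arrowIso : Nonempty (Arrow.mk (Quot.out (q1 f)).ι ≅ Arrow.mk f) := by
  obtain ⟨e⟩ := out_iso (q1 f) (rfl :
    Quot.mk (FactIsoRel f) (Factorisation.terminal) = q1 f)
  exact ⟨arrowIsoι e⟩

lemma eq_q0_iff_isIso_out_ι (hC : IsMobiusCategory C) (q : Quot (FactIsoRel f)) :
    q = q0 f ↔ IsIso (Quot.out q).ι := by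
  constructor
  · rintro rfl; exact isIso_out_q0_ι
  · intro h
    rw [← Quot.out_eq q]
    exact mk_eq_q0_of_isIso_ι hC _ h

lemma eq_q1_iff_isIso_out_π (hC : IsMobiusCategory C) (q : Quot (FactIsoRel f)) :
    q = q1 f ↔ IsIso (Quot.out q).π := by
  constructor
  · rintro rfl; exact isIso_out_q1_π
  · intro h
    rw [← Quot.out_eq q]
    exact mk_eq_q1_of_isIso_π hC _ h

open Classical in
/-- Splitting off one term of a finite sum. -/
lemma finsum_split {α : Type*} [Finite α] (g : α → A) (a₀ : α) :
    ∑ᶠ a, g a = g a₀ + ∑ᶠ a, if a = a₀ then 0 else g a := by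
  haveI := Fintype.ofFinite α
  rw [finsum_eq_sum_of_fintype, finsum_eq_sum_of_fintype,
    ← Finset.add_sum_erase _ g (Finset.mem_univ a₀),
    ← Finset.add_sum_erase _ (fun a => if a = a₀ then (0 : A) else g a) (Finset.mem_univ a₀)]
  have h1 : (if a₀ = a₀ then (0 : A) else g a₀) = 0 := by simp
  rw [h1, zero_add]
  congr 1
  exact Finset.sum_congr rfl (fun b hb => (if_neg (Finset.ne_of_mem_erase hb)).symm)

end Splits

section Rinv

variable {μ : ∀ ⦃x y : C⦄, (x ⟶ y) → A}

open Classical in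
/-- Fuel-based recursion for the right convolution inverse. -/
noncomputable def rinvAux (μ : ∀ ⦃x y : C⦄, (x ⟶ y) → A) : ℕ → ∀ ⦃x y : C⦄, (x ⟶ y) → A
  | 0 => fun _ _ f => if IsIso f then 1 else 0
  | (n+1) => fun _ _ f => if IsIso f then 1 else
      -∑ᶠ q : Quot (FactIsoRel f), if IsIso (Quot.out q).ι then 0
        else μ (Quot.out q).ι * rinvAux μ n (Quot.out q).π

/-- The right convolution inverse. -/
noncomputable def rinv (μ : ∀ ⦃x y : C⦄, (x ⟶ y) → A) : ∀ ⦃x y : C⦄, (x ⟶ y) → A :=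
  fun _ _ f => rinvAux μ (deg f) f

open Classical in
/-- Fuel-based recursion for the left convolution inverse. -/
noncomputable def linvAux (μ : ∀ ⦃x y : C⦄, (x ⟶ y) → A) : ℕ → ∀ ⦃x y : C⦄, (x ⟶ y) → A
  | 0 => fun _ _ f => if IsIso f then 1 else 0
  | (n+1) => fun _ _ f => if IsIso f then 1 else
      -∑ᶠ q : Quot (FactIsoRel f), if IsIso (Quot.out q).π then 0
        else linvAux μ n (Quot.out q).ι * μ (Quot.out q).π

/-- The left convolution inverse. -/
noncomputable def linv (μ : ∀ ⦃x y : C⦄, (x ⟶ y) → A) : ∀ ⦃x y : C⦄, (x ⟶ y) → A :=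
  fun _ _ f => linvAux μ (deg f) f

variable {x y : C} {f : x ⟶ y}

lemma rinvAux_isIso (n : ℕ) (hf : IsIso f) : rinvAux μ n f = 1 := by
  cases n <;> simp [rinvAux, hf]

lemma linvAux_isIso (n : ℕ) (hf : IsIso f) : linvAux μ n f = 1 := by
  cases n <;> simp [linvAux, hf]

lemma rinv_isIso (hf : IsIso f) : rinv μ f = 1 := rinvAux_isIso _ hf

lemma linv_isIso (hf : IsIso f) : linv μ f = 1 := linvAux_isIso _ hf

lemma rinvAux_stable (hC : IsMobiusCategory C) :
    ∀ n m : ℕ, ∀ {x y : C} (f : x ⟶ y), deg f ≤ n → deg f ≤ m →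
      rinvAux μ n f = rinvAux μ m f := by
  intro n
  induction n with
  | zero =>
    intro m x y f hn _
    exact absurd hn (by have := deg_pos hC f; omega)
  | succ n ih =>
    intro m x y f hn hm
    match m with
    | 0 => exact absurd hm (by have := deg_pos hC f; omega)
    | (m+1) =>
      by_cases hf : IsIso f
      · simp [rinvAux, hf]
      · simp only [rinvAux, if_neg hf, neg_inj]
        apply finsum_congr
        intro q
        by_cases hq : IsIso (Quot.out q).ι
        · simp [hq]
        · simp only [if_neg hq]
          congr 1
          have hlt : deg (Quot.out q).π < deg f := deg_lt_of_not_isIso_ι hC _ hq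
          exact ih m _ (by omega) (by omega)

lemma linvAux_stable (hC : IsMobiusCategory C) :
    ∀ n m : ℕ, ∀ {x y : C} (f : x ⟶ y), deg f ≤ n → deg f ≤ m →
      linvAux μ n f = linvAux μ m f := by
  intro n
  induction n with
  | zero =>
    intro m x y f hn _
    exact absurd hn (by have := deg_pos hC f; omega)
  | succ n ih =>
    intro m x y f hn hm
    match m with
    | 0 => exact absurd hm (by have := deg_pos hC f; omega)
    | (m+1) =>
      by_cases hf : IsIso f
      · simp [linvAux, hf]
      · simp only [linvAux, if_neg hf, neg_inj]
        apply finsum_congr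
        intro q
        by_cases hq : IsIso (Quot.out q).π
        · simp [hq]
        · simp only [if_neg hq]
          congr 1
          have hlt : deg (Quot.out q).ι < deg f := deg_lt_of_not_isIso_π hC _ hq
          exact ih m _ (by omega) (by omega)

open Classical in
lemma rinv_spec (hC : IsMobiusCategory C) (hf : ¬IsIso f) :
    rinv μ f = -∑ᶠ q : Quot (FactIsoRel f), (if IsIso (Quot.out q).ι then 0
      else μ (Quot.out q).ι * rinv μ (Quot.out q).π) := by
  obtain ⟨n, hn⟩ : ∃ n, deg f = n + 1 := ⟨deg f - 1, by have := deg_pos hC f; omega⟩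
  show rinvAux μ (deg f) f = _
  rw [hn]
  simp only [rinvAux, if_neg hf, neg_inj]
  apply finsum_congr
  intro q
  by_cases hq : IsIso (Quot.out q).ι
  · simp [hq]
  · simp only [if_neg hq]
    congr 1
    have hlt : deg (Quot.out q).π < deg f := deg_lt_of_not_isIso_ι hC _ hq
    exact rinvAux_stable hC n (deg (Quot.out q).π) _ (by omega) le_rfl

open Classical in
lemma linv_spec (hC : IsMobiusCategory C) (hf : ¬IsIso f) :
    linv μ f = -∑ᶠ q : Quot (FactIsoRel f), (if IsIso (Quot.out q).π then 0
      else linv μ (Quot.out q).ι * μ (Quot.out q).π) := by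
  obtain ⟨n, hn⟩ : ∃ n, deg f = n + 1 := ⟨deg f - 1, by have := deg_pos hC f; omega⟩
  show linvAux μ (deg f) f = _
  rw [hn]
  simp only [linvAux, if_neg hf, neg_inj]
  apply finsum_congr
  intro q
  by_cases hq : IsIso (Quot.out q).π
  · simp [hq]
  · simp only [if_neg hq]
    congr 1
    have hlt : deg (Quot.out q).ι < deg f := deg_lt_of_not_isIso_π hC _ hq
    exact linvAux_stable hC n (deg (Quot.out q).ι) _ (by omega) le_rfl

end Rinv

end MobiusAux
namespace MobiusAux

variable {C : Type*} [Category C] {A : Type*} [CommRing A]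

section Invariance

variable {x y x' y' : C} {f : x ⟶ y} {f' : x' ⟶ y'}
variable {μ ν : ∀ ⦃x y : C⦄, (x ⟶ y) → A}

lemma out_trans_iso (e : Arrow.mk f ≅ Arrow.mk f') (q : Quot (FactIsoRel f)) :
    Nonempty (Quot.out (transEquiv e q) ≅ transObj e (Quot.out q)) := by
  have h : Quot.mk (FactIsoRel f') (transObj e (Quot.out q)) = transEquiv e q := by
    conv_rhs => rw [← Quot.out_eq q]
    rfl
  exact out_iso _ h

/-- The arrow isomorphism comparing `ι` of a representative with `ι` of the transported
representative. -/
noncomputable def outTransArrowι (e : Arrow.mk f ≅ Arrow.mk f') (q : Quot (FactIsoRel f)) :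
    Arrow.mk (Quot.out q).ι ≅ Arrow.mk (Quot.out (transEquiv e q)).ι :=
  (transArrowι e (Quot.out q)).trans
    (arrowIsoι (Classical.choice (out_trans_iso e q))).symm

noncomputable def outTransArrowπ (e : Arrow.mk f ≅ Arrow.mk f') (q : Quot (FactIsoRel f)) :
    Arrow.mk (Quot.out q).π ≅ Arrow.mk (Quot.out (transEquiv e q)).π :=
  (transArrowπ e (Quot.out q)).trans
    (arrowIsoπ (Classical.choice (out_trans_iso e q))).symm

lemma conv_invariant (hC : IsMobiusCategory C) (hμ : ArrowInvariant μ)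
    (hν : ArrowInvariant ν) : ArrowInvariant (mobiusConv μ ν) := by
  intro x y x' y' f f' ex ey hw
  let e : Arrow.mk f ≅ Arrow.mk f' := Arrow.isoMk ex ey hw.symm
  haveI := finiteQuot hC f
  haveI := finiteQuot hC f'
  haveI := Fintype.ofFinite (Quot (FactIsoRel f))
  haveI := Fintype.ofFinite (Quot (FactIsoRel f'))
  show ∑ᶠ q : Quot (FactIsoRel f), μ (Quot.out q).ι * ν (Quot.out q).π
    = ∑ᶠ q : Quot (FactIsoRel f'), μ (Quot.out q).ι * ν (Quot.out q).π
  rw [finsum_eq_sum_of_fintype, finsum_eq_sum_of_fintype]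
  refine Fintype.sum_equiv (transEquiv e) _ _ (fun q => ?_)
  rw [inv_eq_of_arrowIso hμ (outTransArrowι e q), inv_eq_of_arrowIso hν (outTransArrowπ e q)]

lemma conv_isIso_val (hC : IsMobiusCategory C)
    (hμ1 : ∀ ⦃x y : C⦄ (f : x ⟶ y), IsIso f → μ f = 1)
    (hν1 : ∀ ⦃x y : C⦄ (f : x ⟶ y), IsIso f → ν f = 1)
    (hf : IsIso f) : mobiusConv μ ν f = 1 := by
  haveI := subsingletonQuot hC hf
  haveI := nonemptyQuot f
  letI : Unique (Quot (FactIsoRel f)) := uniqueOfSubsingleton (Classical.arbitrary _)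
  show ∑ᶠ q : Quot (FactIsoRel f), μ (Quot.out q).ι * ν (Quot.out q).π = 1
  rw [finsum_unique, hμ1 _ (isIso_ι_of_isIso hC hf _), hν1 _ (isIso_π_of_isIso hC hf _),
    one_mul]

lemma rinv_invariant (hC : IsMobiusCategory C) (hμ : ArrowInvariant μ) :
    ArrowInvariant (rinv μ) := by
  suffices h : ∀ n {x y x' y' : C} (f : x ⟶ y) (f' : x' ⟶ y')
      (e : Arrow.mk f ≅ Arrow.mk f'), deg f ≤ n → rinv μ f = rinv μ f' by
    intro x y x' y' f f' ex ey hw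
    exact h (deg f) f f' (Arrow.isoMk ex ey hw.symm) le_rfl
  intro n
  induction n with
  | zero =>
    intro x y x' y' f f' e hn
    exact absurd hn (by have := deg_pos hC f; omega)
  | succ n ih =>
    intro x y x' y' f f' e hn
    by_cases hf : IsIso f
    · rw [rinv_isIso hf, rinv_isIso (isIso_of_arrowIso e hf)]
    · have hf' : ¬IsIso f' := fun h => hf (isIso_of_arrowIso e.symm h)
      rw [rinv_spec hC hf, rinv_spec hC hf', neg_inj]
      haveI := finiteQuot hC f
      haveI := finiteQuot hC f'
      haveI := Fintype.ofFinite (Quot (FactIsoRel f))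
      haveI := Fintype.ofFinite (Quot (FactIsoRel f'))
      rw [finsum_eq_sum_of_fintype, finsum_eq_sum_of_fintype]
      refine Fintype.sum_equiv (transEquiv e) _ _ (fun q => ?_)
      by_cases hq : IsIso (Quot.out q).ι
      · rw [if_pos hq, if_pos (isIso_of_arrowIso (outTransArrowι e q) hq)]
      · have hq' : ¬IsIso (Quot.out (transEquiv e q)).ι :=
          fun h => hq (isIso_of_arrowIso (outTransArrowι e q).symm h)
        rw [if_neg hq, if_neg hq', inv_eq_of_arrowIso hμ (outTransArrowι e q)]
        congr 1
        have hlt : deg (Quot.out q).π < deg f := deg_lt_of_not_isIso_ι hC _ hq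
        exact ih _ _ (outTransArrowπ e q) (by omega)

lemma linv_invariant (hC : IsMobiusCategory C) (hμ : ArrowInvariant μ) :
    ArrowInvariant (linv μ) := by
  suffices h : ∀ n {x y x' y' : C} (f : x ⟶ y) (f' : x' ⟶ y')
      (e : Arrow.mk f ≅ Arrow.mk f'), deg f ≤ n → linv μ f = linv μ f' by
    intro x y x' y' f f' ex ey hw
    exact h (deg f) f f' (Arrow.isoMk ex ey hw.symm) le_rfl
  intro n
  induction n with
  | zero =>
    intro x y x' y' f f' e hn
    exact absurd hn (by have := deg_pos hC f; omega)
  | succ n ih =>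
    intro x y x' y' f f' e hn
    by_cases hf : IsIso f
    · rw [linv_isIso hf, linv_isIso (isIso_of_arrowIso e hf)]
    · have hf' : ¬IsIso f' := fun h => hf (isIso_of_arrowIso e.symm h)
      rw [linv_spec hC hf, linv_spec hC hf', neg_inj]
      haveI := finiteQuot hC f
      haveI := finiteQuot hC f'
      haveI := Fintype.ofFinite (Quot (FactIsoRel f))
      haveI := Fintype.ofFinite (Quot (FactIsoRel f'))
      rw [finsum_eq_sum_of_fintype, finsum_eq_sum_of_fintype]
      refine Fintype.sum_equiv (transEquiv e) _ _ (fun q => ?_)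
      by_cases hq : IsIso (Quot.out q).π
      · rw [if_pos hq, if_pos (isIso_of_arrowIso (outTransArrowπ e q) hq)]
      · have hq' : ¬IsIso (Quot.out (transEquiv e q)).π :=
          fun h => hq (isIso_of_arrowIso (outTransArrowπ e q).symm h)
        rw [if_neg hq, if_neg hq', inv_eq_of_arrowIso hμ (outTransArrowπ e q)]
        congr 1
        have hlt : deg (Quot.out q).ι < deg f := deg_lt_of_not_isIso_π hC _ hq
        exact ih _ _ (outTransArrowι e q) (by omega)

open Classical in
lemma conv_rinv (hC : IsMobiusCategory C) (hμ : ArrowInvariant μ)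
    (hμ1 : ∀ ⦃x y : C⦄ (f : x ⟶ y), IsIso f → μ f = 1) (f : x ⟶ y) :
    mobiusConv μ (rinv μ) f = mobiusDelta C A f := by
  by_cases hf : IsIso f
  · rw [conv_isIso_val hC hμ1 (fun _ _ g hg => rinv_isIso hg) hf]
    simp [mobiusDelta, hf]
  · haveI := finiteQuot hC f
    show ∑ᶠ q : Quot (FactIsoRel f), μ (Quot.out q).ι * rinv μ (Quot.out q).π = _
    rw [finsum_split _ (q0 f), hμ1 _ isIso_out_q0_ι, one_mul]
    have h2 : rinv μ (Quot.out (q0 f)).π = rinv μ f := by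
      obtain ⟨d⟩ := out_q0_π_arrowIso (f := f)
      exact inv_eq_of_arrowIso (rinv_invariant hC hμ) d
    have h3 : (∑ᶠ q : Quot (FactIsoRel f),
        if q = q0 f then 0 else μ (Quot.out q).ι * rinv μ (Quot.out q).π)
        = -(rinv μ f) := by
      rw [rinv_spec hC hf, neg_neg]
      apply finsum_congr
      intro q
      by_cases hq : q = q0 f
      · rw [if_pos hq, if_pos ((eq_q0_iff_isIso_out_ι hC q).mp hq)]
      · rw [if_neg hq, if_neg (fun h => hq ((eq_q0_iff_isIso_out_ι hC q).mpr h))]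
    rw [h2, h3]
    simp [mobiusDelta, hf]

open Classical in
lemma linv_conv (hC : IsMobiusCategory C) (hμ : ArrowInvariant μ)
    (hμ1 : ∀ ⦃x y : C⦄ (f : x ⟶ y), IsIso f → μ f = 1) (f : x ⟶ y) :
    mobiusConv (linv μ) μ f = mobiusDelta C A f := by
  by_cases hf : IsIso f
  · rw [conv_isIso_val hC (fun _ _ g hg => linv_isIso hg) hμ1 hf]
    simp [mobiusDelta, hf]
  · haveI := finiteQuot hC f
    show ∑ᶠ q : Quot (FactIsoRel f), linv μ (Quot.out q).ι * μ (Quot.out q).π = _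
    rw [finsum_split _ (q1 f), hμ1 _ isIso_out_q1_π, mul_one]
    have h2 : linv μ (Quot.out (q1 f)).ι = linv μ f := by
      obtain ⟨d⟩ := out_q1_ι_arrowIso (f := f)
      exact inv_eq_of_arrowIso (linv_invariant hC hμ) d
    have h3 : (∑ᶠ q : Quot (FactIsoRel f),
        if q = q1 f then 0 else linv μ (Quot.out q).ι * μ (Quot.out q).π)
        = -(linv μ f) := by
      rw [linv_spec hC hf, neg_neg]
      apply finsum_congr
      intro q
      by_cases hq : q = q1 f
      · rw [if_pos hq, if_pos ((eq_q1_iff_isIso_out_π hC q).mp hq)]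
      · rw [if_neg hq, if_neg (fun h => hq ((eq_q1_iff_isIso_out_π hC q).mpr h))]
    rw [h2, h3]
    simp [mobiusDelta, hf]

open Classical in
lemma delta_conv (hC : IsMobiusCategory C) (hν : ArrowInvariant ν) (f : x ⟶ y) :
    mobiusConv (mobiusDelta C A) ν f = ν f := by
  haveI := finiteQuot hC f
  show ∑ᶠ q : Quot (FactIsoRel f), mobiusDelta C A (Quot.out q).ι * ν (Quot.out q).π = ν f
  rw [finsum_split _ (q0 f)]
  have h1 : mobiusDelta C A (Quot.out (q0 f)).ι = 1 := by
    simp [mobiusDelta, isIso_out_q0_ι]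
  have h2 : ν (Quot.out (q0 f)).π = ν f := by
    obtain ⟨d⟩ := out_q0_π_arrowIso (f := f)
    exact inv_eq_of_arrowIso hν d
  have h3 : (∑ᶠ q : Quot (FactIsoRel f),
      if q = q0 f then 0 else mobiusDelta C A (Quot.out q).ι * ν (Quot.out q).π) = 0 := by
    have hall : ∀ q : Quot (FactIsoRel f), (if q = q0 f then 0
        else mobiusDelta C A (Quot.out q).ι * ν (Quot.out q).π) = (0 : A) := by
      intro q
      by_cases hq : q = q0 f
      · rw [if_pos hq]
      · rw [if_neg hq]
        have : ¬IsIso (Quot.out q).ι := fun h => hq ((eq_q0_iff_isIso_out_ι hC q).mpr h)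
        simp [mobiusDelta, this]
    rw [finsum_congr hall, finsum_zero]
  rw [h1, one_mul, h2, h3, add_zero]

open Classical in
lemma conv_delta (hC : IsMobiusCategory C) (hν : ArrowInvariant ν) (f : x ⟶ y) :
    mobiusConv ν (mobiusDelta C A) f = ν f := by
  haveI := finiteQuot hC f
  show ∑ᶠ q : Quot (FactIsoRel f), ν (Quot.out q).ι * mobiusDelta C A (Quot.out q).π = ν f
  rw [finsum_split _ (q1 f)]
  have h1 : mobiusDelta C A (Quot.out (q1 f)).π = 1 := by
    simp [mobiusDelta, isIso_out_q1_π]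
  have h2 : ν (Quot.out (q1 f)).ι = ν f := by
    obtain ⟨d⟩ := out_q1_ι_arrowIso (f := f)
    exact inv_eq_of_arrowIso hν d
  have h3 : (∑ᶠ q : Quot (FactIsoRel f),
      if q = q1 f then 0 else ν (Quot.out q).ι * mobiusDelta C A (Quot.out q).π) = 0 := by
    have hall : ∀ q : Quot (FactIsoRel f), (if q = q1 f then 0
        else ν (Quot.out q).ι * mobiusDelta C A (Quot.out q).π) = (0 : A) := by
      intro q
      by_cases hq : q = q1 f
      · rw [if_pos hq]
      · rw [if_neg hq]
        have : ¬IsIso (Quot.out q).π := fun h => hq ((eq_q1_iff_isIso_out_π hC q).mpr h)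
        simp [mobiusDelta, this]
    rw [finsum_congr hall, finsum_zero]
  rw [h1, mul_one, h2, h3, add_zero]

lemma conv_congr_right {ρ ν ν' : ∀ ⦃x y : C⦄, (x ⟶ y) → A}
    (h : ∀ ⦃x y : C⦄ (f : x ⟶ y), ν f = ν' f) (f : x ⟶ y) :
    mobiusConv ρ ν f = mobiusConv ρ ν' f :=
  finsum_congr fun q => by rw [h]

lemma conv_congr_left {ρ ρ' ν : ∀ ⦃x y : C⦄, (x ⟶ y) → A}
    (h : ∀ ⦃x y : C⦄ (f : x ⟶ y), ρ f = ρ' f) (f : x ⟶ y) :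
    mobiusConv ρ ν f = mobiusConv ρ' ν f :=
  finsum_congr fun q => by rw [h]

end Invariance

end MobiusAux
namespace MobiusAux

variable {C : Type*} [Category C] {A : Type*} [CommRing A]

section Assoc

variable {x y : C}

/-- Double factorisations of a morphism. -/
structure DFact (f : x ⟶ y) where
  m1 : C
  m2 : C
  g : x ⟶ m1
  h : m1 ⟶ m2
  k : m2 ⟶ y
  w : g ≫ h ≫ k = f

variable {f : x ⟶ y}

/-- Isomorphism relation on double factorisations. -/
def DRel (f : x ⟶ y) : DFact f → DFact f → Prop := fun D D' =>
  ∃ (e1 : D.m1 ≅ D'.m1) (e2 : D.m2 ≅ D'.m2),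
    D.g ≫ e1.hom = D'.g ∧ e1.hom ≫ D'.h = D.h ≫ e2.hom ∧ e2.hom ≫ D'.k = D.k

lemma dRel_equivalence : Equivalence (DRel f) := by
  constructor
  · intro D
    exact ⟨Iso.refl _, Iso.refl _, by simp, by simp, by simp⟩
  · rintro D D' ⟨e1, e2, c1, c2, c3⟩
    refine ⟨e1.symm, e2.symm, ?_, ?_, ?_⟩
    · rw [← c1, Category.assoc, Iso.symm_hom, e1.hom_inv_id, Category.comp_id]
    · rw [Iso.symm_hom, Iso.symm_hom, Iso.inv_comp_eq, ← Category.assoc, c2,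
        Category.assoc, e2.hom_inv_id, Category.comp_id]
    · rw [Iso.symm_hom, Iso.inv_comp_eq, c3]
  · rintro D D' D'' ⟨e1, e2, c1, c2, c3⟩ ⟨d1, d2, b1, b2, b3⟩
    refine ⟨e1.trans d1, e2.trans d2, ?_, ?_, ?_⟩
    · show D.g ≫ e1.hom ≫ d1.hom = D''.g
      rw [← Category.assoc, c1, b1]
    · show (e1.hom ≫ d1.hom) ≫ D''.h = D.h ≫ e2.hom ≫ d2.hom
      rw [Category.assoc, b2, ← Category.assoc, c2, Category.assoc]
    · show (e2.hom ≫ d2.hom) ≫ D''.k = D.k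
      rw [Category.assoc, b3, c3]

lemma dRel_of_mk_eq {D D' : DFact f}
    (h : Quot.mk (DRel f) D = Quot.mk (DRel f) D') : DRel f D D' :=
  dRel_equivalence.eqvGen_iff.mp (Quot.eqvGen_exact h)

/-- The outer-right factorisation underlying a double factorisation. -/
@[simps]
def dObj2 (D : DFact f) : Factorisation f where
  mid := D.m2
  ι := D.g ≫ D.h
  π := D.k
  ι_π := by rw [Category.assoc]; exact D.w

/-- The outer-left factorisation underlying a double factorisation. -/
@[simps]
def dObj1 (D : DFact f) : Factorisation f where
  mid := D.m1
  ι := D.g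
  π := D.h ≫ D.k
  ι_π := D.w

lemma dObj2_rel {D D' : DFact f} (hrel : DRel f D D') : Nonempty (dObj2 D ≅ dObj2 D') := by
  obtain ⟨e1, e2, c1, c2, c3⟩ := hrel
  refine ⟨isoOfIsoH ⟨e2.hom, ?_, c3⟩ e2.isIso_hom⟩
  show (D.g ≫ D.h) ≫ e2.hom = D'.g ≫ D'.h
  rw [Category.assoc, ← c2, ← Category.assoc, c1]

lemma dObj1_rel {D D' : DFact f} (hrel : DRel f D D') : Nonempty (dObj1 D ≅ dObj1 D') := by
  obtain ⟨e1, e2, c1, c2, c3⟩ := hrel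
  refine ⟨isoOfIsoH ⟨e1.hom, c1, ?_⟩ e1.isIso_hom⟩
  show e1.hom ≫ D'.h ≫ D'.k = D.h ≫ D.k
  rw [← Category.assoc, c2, Category.assoc, c3]

/-- Projection of a double factorisation class onto its outer-right class. -/
noncomputable def pW (f : x ⟶ y) : Quot (DRel f) → Quot (FactIsoRel f) :=
  Quot.lift (fun D => Quot.mk (FactIsoRel f) (dObj2 D))
    (fun _ _ hrel => Quot.sound (dObj2_rel hrel))

/-- Projection of a double factorisation class onto its outer-left class. -/
noncomputable def pW' (f : x ⟶ y) : Quot (DRel f) → Quot (FactIsoRel f) :=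
  Quot.lift (fun D => Quot.mk (FactIsoRel f) (dObj1 D))
    (fun _ _ hrel => Quot.sound (dObj1_rel hrel))

variable {μ ν ρ : ∀ ⦃x y : C⦄, (x ⟶ y) → A}

/-- The convolution term attached to a double factorisation class. -/
noncomputable def dterm (hμ : ArrowInvariant μ) (hν : ArrowInvariant ν)
    (hρ : ArrowInvariant ρ) (f : x ⟶ y) : Quot (DRel f) → A :=
  Quot.lift (fun D => μ D.g * ν D.h * ρ D.k) (by
    rintro D D' ⟨e1, e2, c1, c2, c3⟩
    show μ D.g * ν D.h * ρ D.k = μ D'.g * ν D'.h * ρ D'.k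
    have a1 : Arrow.mk D.g ≅ Arrow.mk D'.g :=
      Arrow.isoMk (Iso.refl x) e1 (by simpa using c1.symm)
    have a2 : Arrow.mk D.h ≅ Arrow.mk D'.h := Arrow.isoMk e1 e2 (by simpa using c2)
    have a3 : Arrow.mk D.k ≅ Arrow.mk D'.k :=
      Arrow.isoMk e2 (Iso.refl y) (by simpa using c3)
    rw [inv_eq_of_arrowIso hμ a1, inv_eq_of_arrowIso hν a2, inv_eq_of_arrowIso hρ a3])

/-- Assembling a double factorisation from a factorisation of `F.ι`. -/
@[simps]
def dmkι (F : Factorisation f) (G : Factorisation F.ι) : DFact f where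
  m1 := G.mid
  m2 := F.mid
  g := G.ι
  h := G.π
  k := F.π
  w := by rw [← Category.assoc, G.ι_π, F.ι_π]

/-- Assembling a double factorisation from a factorisation of `F.π`. -/
@[simps]
def dmkπ (F : Factorisation f) (K : Factorisation F.π) : DFact f where
  m1 := F.mid
  m2 := K.mid
  g := F.ι
  h := K.ι
  k := K.π
  w := by rw [K.ι_π, F.ι_π]

noncomputable def liftι (F : Factorisation f) :
    Quot (FactIsoRel F.ι) → Quot (DRel f) :=
  Quot.map (dmkι F) (fun G G' => fun ⟨d⟩ =>
    ⟨isoH d, Iso.refl F.mid, d.hom.ι_h, by show d.hom.h ≫ G'.π = G.π ≫ 𝟙 F.mid; simp [d.hom.h_π, isoH], by show 𝟙 F.mid ≫ F.π = F.π; simp⟩)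

noncomputable def liftπ (F : Factorisation f) :
    Quot (FactIsoRel F.π) → Quot (DRel f) :=
  Quot.map (dmkπ F) (fun K K' => fun ⟨d⟩ =>
    ⟨Iso.refl F.mid, isoH d, by show F.ι ≫ 𝟙 F.mid = F.ι; simp, by show 𝟙 F.mid ≫ K'.ι = K.ι ≫ d.hom.h; simp [← d.hom.ι_h, isoH], d.hom.h_π⟩)

lemma pW_liftι (F : Factorisation f) (r : Quot (FactIsoRel F.ι)) :
    pW f (liftι F r) = Quot.mk (FactIsoRel f) F := by
  induction r using Quot.ind with
  | _ G =>
    refine Quot.sound ⟨isoOfIsoH ⟨𝟙 F.mid, ?_, ?_⟩ (IsIso.id F.mid)⟩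
    · show (G.ι ≫ G.π) ≫ 𝟙 F.mid = F.ι
      rw [Category.comp_id, G.ι_π]
    · show 𝟙 F.mid ≫ F.π = F.π
      simp

lemma pW'_liftπ (F : Factorisation f) (s : Quot (FactIsoRel F.π)) :
    pW' f (liftπ F s) = Quot.mk (FactIsoRel f) F := by
  induction s using Quot.ind with
  | _ K =>
    refine Quot.sound ⟨isoOfIsoH ⟨𝟙 F.mid, ?_, ?_⟩ ?_⟩
    · show F.ι ≫ 𝟙 F.mid = F.ι
      simp
    · show 𝟙 F.mid ≫ F.π = K.ι ≫ K.π
      rw [Category.id_comp, K.ι_π]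
    · exact IsIso.id F.mid

lemma liftι_inj (hC : IsMobiusCategory C) (F : Factorisation f) :
    Function.Injective (liftι F) := by
  refine Quot.ind fun G => Quot.ind fun G' hq => ?_
  obtain ⟨e1, e2, c1, c2, c3⟩ := dRel_of_mk_eq hq
  simp only [dmkι_g, dmkι_h, dmkι_k] at c1 c2 c3
  have he2 : e2.hom = 𝟙 F.mid := by
    have hu : (⟨e2.hom, ?_, c3⟩ : F ⟶ F) = 𝟙 F := thin hC _ _
    · exact congrArg Factorisation.Hom.h hu
    · show F.ι ≫ e2.hom = F.ι
      conv_lhs => rw [← G.ι_π]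
      erw [Category.assoc, ← c2, ← Category.assoc, c1, G'.ι_π]
  refine Quot.sound ⟨isoOfIsoH ⟨e1.hom, c1, ?_⟩ e1.isIso_hom⟩
  show e1.hom ≫ G'.π = G.π
  erw [c2, he2]
  exact Category.comp_id _

lemma liftπ_inj (hC : IsMobiusCategory C) (F : Factorisation f) :
    Function.Injective (liftπ F) := by
  refine Quot.ind fun K => Quot.ind fun K' hq => ?_
  obtain ⟨e1, e2, c1, c2, c3⟩ := dRel_of_mk_eq hq
  simp only [dmkπ_g, dmkπ_h, dmkπ_k] at c1 c2 c3
  have he1 : e1.hom = 𝟙 F.mid := by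
    have hu : (⟨e1.hom, c1, ?_⟩ : F ⟶ F) = 𝟙 F := thin hC _ _
    · exact congrArg Factorisation.Hom.h hu
    · show e1.hom ≫ F.π = F.π
      conv_lhs => rw [← K'.ι_π]
      erw [← Category.assoc, c2, Category.assoc, c3, K.ι_π]
  refine Quot.sound ⟨isoOfIsoH ⟨e2.hom, ?_, c3⟩ e2.isIso_hom⟩
  show K.ι ≫ e2.hom = K'.ι
  erw [← c2, he1]
  exact Category.id_comp _

lemma pW_fiber (q : Quot (FactIsoRel f)) (w : Quot (DRel f)) (hw : pW f w = q) :
    ∃ r : Quot (FactIsoRel (Quot.out q).ι), liftι (Quot.out q) r = w := by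
  induction w using Quot.ind with
  | _ D =>
    obtain ⟨e⟩ := rel_of_mk_eq (f := f) (hw.trans (Quot.out_eq q).symm)
    set F := Quot.out q
    refine ⟨Quot.mk _ ⟨D.m1, D.g, D.h ≫ e.hom.h, ?_⟩, ?_⟩
    · refine (Category.assoc _ _ _).symm.trans ?_
      exact e.hom.ι_h
    · refine Quot.sound ⟨Iso.refl D.m1, (isoH e).symm, ?_, ?_, ?_⟩
      · exact Category.comp_id _
      · show (Iso.refl D.m1).hom ≫ D.h = (D.h ≫ e.hom.h) ≫ e.inv.h
        erw [Category.assoc]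
        have : e.hom.h ≫ e.inv.h = 𝟙 _ := (isoH e).hom_inv_id
        erw [this]
        simp
        exact (Category.comp_id _).symm
      · show e.inv.h ≫ D.k = F.π
        exact e.inv.h_π
  
lemma pW'_fiber (q : Quot (FactIsoRel f)) (w : Quot (DRel f)) (hw : pW' f w = q) :
    ∃ s : Quot (FactIsoRel (Quot.out q).π), liftπ (Quot.out q) s = w := by
  induction w using Quot.ind with
  | _ D =>
    obtain ⟨e⟩ := rel_of_mk_eq (f := f) (hw.trans (Quot.out_eq q).symm)
    set F := Quot.out q
    refine ⟨Quot.mk _ ⟨D.m2, e.inv.h ≫ D.h, D.k, ?_⟩, ?_⟩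
    · refine (Category.assoc _ _ _).trans ?_
      exact e.inv.h_π
    · refine Quot.sound ⟨(isoH e).symm, Iso.refl D.m2, ?_, ?_, ?_⟩
      · show F.ι ≫ e.inv.h = D.g
        exact e.inv.ι_h
      · show e.inv.h ≫ D.h = (e.inv.h ≫ D.h) ≫ (Iso.refl D.m2).hom
        simp
      · exact Category.id_comp _

/-- The fibre of `pW` over `q` is equivalent to classes of factorisations of `ι`. -/
noncomputable def fiberEquivι (hC : IsMobiusCategory C) (q : Quot (FactIsoRel f)) :
    Quot (FactIsoRel (Quot.out q).ι) ≃ {w : Quot (DRel f) // pW f w = q} := by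
  refine Equiv.ofBijective
    (fun r => ⟨liftι (Quot.out q) r, by rw [pW_liftι, Quot.out_eq]⟩) ⟨?_, ?_⟩
  · intro r r' hrr
    exact liftι_inj hC _ (congrArg Subtype.val hrr)
  · rintro ⟨w, hw⟩
    obtain ⟨r, hr⟩ := pW_fiber q w hw
    exact ⟨r, Subtype.ext hr⟩

/-- The fibre of `pW'` over `q` is equivalent to classes of factorisations of `π`. -/
noncomputable def fiberEquivπ (hC : IsMobiusCategory C) (q : Quot (FactIsoRel f)) :
    Quot (FactIsoRel (Quot.out q).π) ≃ {w : Quot (DRel f) // pW' f w = q} := by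
  refine Equiv.ofBijective
    (fun s => ⟨liftπ (Quot.out q) s, by rw [pW'_liftπ, Quot.out_eq]⟩) ⟨?_, ?_⟩
  · intro s s' hss
    exact liftπ_inj hC _ (congrArg Subtype.val hss)
  · rintro ⟨w, hw⟩
    obtain ⟨s, hs⟩ := pW'_fiber q w hw
    exact ⟨s, Subtype.ext hs⟩

lemma finiteW (hC : IsMobiusCategory C) (f : x ⟶ y) : Finite (Quot (DRel f)) := by
  haveI := finiteQuot hC f
  haveI : ∀ q : Quot (FactIsoRel f), Finite {w : Quot (DRel f) // pW f w = q} := fun q => by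
    haveI := finiteQuot hC (Quot.out q).ι
    exact Finite.of_equiv _ (fiberEquivι hC q)
  exact Finite.of_equiv _ (Equiv.sigmaFiberEquiv (pW f))

lemma sum_dterm_left (hC : IsMobiusCategory C) (hμ : ArrowInvariant μ)
    (hν : ArrowInvariant ν) (hρ : ArrowInvariant ρ) (f : x ⟶ y) :
    mobiusConv (mobiusConv μ ν) ρ f = ∑ᶠ w : Quot (DRel f), dterm hμ hν hρ f w := by
  classical
  haveI := finiteQuot hC f
  haveI := finiteW hC f
  haveI := Fintype.ofFinite (Quot (FactIsoRel f))
  haveI := Fintype.ofFinite (Quot (DRel f))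
  show (∑ᶠ q : Quot (FactIsoRel f),
      mobiusConv μ ν (Quot.out q).ι * ρ (Quot.out q).π) = _
  rw [finsum_eq_sum_of_fintype, finsum_eq_sum_of_fintype,
    ← Fintype.sum_fiberwise (pW f) (dterm hμ hν hρ f)]
  refine Finset.sum_congr rfl (fun q _ => ?_)
  haveI := finiteQuot hC (Quot.out q).ι
  haveI := Fintype.ofFinite (Quot (FactIsoRel (Quot.out q).ι))
  show (∑ᶠ r : Quot (FactIsoRel (Quot.out q).ι),
      μ (Quot.out r).ι * ν (Quot.out r).π) * ρ (Quot.out q).π = _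
  rw [finsum_eq_sum_of_fintype, Finset.sum_mul]
  refine Fintype.sum_equiv (fiberEquivι hC q) _ _ (fun r => ?_)
  show μ (Quot.out r).ι * ν (Quot.out r).π * ρ (Quot.out q).π
    = dterm hμ hν hρ f (liftι (Quot.out q) r)
  have hrw : liftι (Quot.out q) r
      = Quot.mk (DRel f) (dmkι (Quot.out q) (Quot.out r)) := by
    conv_lhs => rw [← Quot.out_eq r]
    rfl
  rw [hrw]
  rfl

lemma sum_dterm_right (hC : IsMobiusCategory C) (hμ : ArrowInvariant μ)
    (hν : ArrowInvariant ν) (hρ : ArrowInvariant ρ) (f : x ⟶ y) :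
    mobiusConv μ (mobiusConv ν ρ) f = ∑ᶠ w : Quot (DRel f), dterm hμ hν hρ f w := by
  classical
  haveI := finiteQuot hC f
  haveI := finiteW hC f
  haveI := Fintype.ofFinite (Quot (FactIsoRel f))
  haveI := Fintype.ofFinite (Quot (DRel f))
  show (∑ᶠ q : Quot (FactIsoRel f),
      μ (Quot.out q).ι * mobiusConv ν ρ (Quot.out q).π) = _
  rw [finsum_eq_sum_of_fintype, finsum_eq_sum_of_fintype,
    ← Fintype.sum_fiberwise (pW' f) (dterm hμ hν hρ f)]
  refine Finset.sum_congr rfl (fun q _ => ?_)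
  haveI := finiteQuot hC (Quot.out q).π
  haveI := Fintype.ofFinite (Quot (FactIsoRel (Quot.out q).π))
  show μ (Quot.out q).ι * (∑ᶠ s : Quot (FactIsoRel (Quot.out q).π),
      ν (Quot.out s).ι * ρ (Quot.out s).π) = _
  rw [finsum_eq_sum_of_fintype, Finset.mul_sum]
  refine Fintype.sum_equiv (fiberEquivπ hC q) _ _ (fun s => ?_)
  show μ (Quot.out q).ι * (ν (Quot.out s).ι * ρ (Quot.out s).π)
    = dterm hμ hν hρ f (liftπ (Quot.out q) s)
  have hrw : liftπ (Quot.out q) s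
      = Quot.mk (DRel f) (dmkπ (Quot.out q) (Quot.out s)) := by
    conv_lhs => rw [← Quot.out_eq s]
    rfl
  rw [hrw]
  show μ (Quot.out q).ι * (ν (Quot.out s).ι * ρ (Quot.out s).π)
    = μ (Quot.out q).ι * ν (Quot.out s).ι * ρ (Quot.out s).π
  rw [mul_assoc]

lemma conv_assoc (hC : IsMobiusCategory C) (hμ : ArrowInvariant μ)
    (hν : ArrowInvariant ν) (hρ : ArrowInvariant ρ) (f : x ⟶ y) :
    mobiusConv (mobiusConv μ ν) ρ f = mobiusConv μ (mobiusConv ν ρ) f :=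
  (sum_dterm_left hC hμ hν hρ f).trans (sum_dterm_right hC hμ hν hρ f).symm

end Assoc

end MobiusAux

/-- The Möbius group `U(C; A)` of elements of the Möbius algebra taking value `1` on all
isomorphisms forms a group under Möbius convolution: it contains the unit `δ` (which takes
value `1` on isomorphisms), it is closed under convolution, and every element has a two-sided
convolution inverse again taking value `1` on all isomorphisms. -/
theorem mobiusGroup_is_group {C : Type*} [Category C] {A : Type*} [CommRing A]
    (hC : IsMobiusCategory C) :
    (∀ ⦃x y : C⦄ (f : x ⟶ y), IsIso f → mobiusDelta C A f = 1) ∧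
    (∀ μ ν : ∀ ⦃x y : C⦄, (x ⟶ y) → A, ArrowInvariant μ → ArrowInvariant ν →
      (∀ ⦃x y : C⦄ (f : x ⟶ y), IsIso f → μ f = 1) →
      (∀ ⦃x y : C⦄ (f : x ⟶ y), IsIso f → ν f = 1) →
      ArrowInvariant (mobiusConv μ ν) ∧
      (∀ ⦃x y : C⦄ (f : x ⟶ y), IsIso f → mobiusConv μ ν f = 1)) ∧
    (∀ μ : ∀ ⦃x y : C⦄, (x ⟶ y) → A, ArrowInvariant μ →
      (∀ ⦃x y : C⦄ (f : x ⟶ y), IsIso f → μ f = 1) →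
      ∃ ν : ∀ ⦃x y : C⦄, (x ⟶ y) → A, ArrowInvariant ν ∧
        (∀ ⦃x y : C⦄ (f : x ⟶ y), IsIso f → ν f = 1) ∧
        (∀ ⦃x y : C⦄ (f : x ⟶ y),
          mobiusConv μ ν f = mobiusDelta C A f ∧ mobiusConv ν μ f = mobiusDelta C A f)) := by
  constructor
  · intro x y f hf
    simp [mobiusDelta, hf]
  constructor
  · intro μ ν hμ hν hμ1 hν1
    exact ⟨MobiusAux.conv_invariant hC hμ hν,
      fun x y f hf => MobiusAux.conv_isIso_val hC hμ1 hν1 hf⟩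
  · intro μ hμ hμ1
    have hlr : ∀ ⦃x y : C⦄ (g : x ⟶ y), MobiusAux.linv μ g = MobiusAux.rinv μ g := by
      intro x y g
      calc MobiusAux.linv μ g
          = mobiusConv (MobiusAux.linv μ) (mobiusDelta C A) g :=
            (MobiusAux.conv_delta hC (MobiusAux.linv_invariant hC hμ) g).symm
        _ = mobiusConv (MobiusAux.linv μ) (mobiusConv μ (MobiusAux.rinv μ)) g :=
            MobiusAux.conv_congr_right
              (fun _ _ h => (MobiusAux.conv_rinv hC hμ hμ1 h).symm) g
        _ = mobiusConv (mobiusConv (MobiusAux.linv μ) μ) (MobiusAux.rinv μ) g :=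
            (MobiusAux.conv_assoc hC (MobiusAux.linv_invariant hC hμ) hμ
              (MobiusAux.rinv_invariant hC hμ) g).symm
        _ = mobiusConv (mobiusDelta C A) (MobiusAux.rinv μ) g :=
            MobiusAux.conv_congr_left
              (fun _ _ h => MobiusAux.linv_conv hC hμ hμ1 h) g
        _ = MobiusAux.rinv μ g :=
            MobiusAux.delta_conv hC (MobiusAux.rinv_invariant hC hμ) g
    refine ⟨MobiusAux.rinv μ, MobiusAux.rinv_invariant hC hμ,
      fun x y f hf => MobiusAux.rinv_isIso hf,
      fun x y f => ⟨MobiusAux.conv_rinv hC hμ hμ1 f, ?_⟩⟩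
    calc mobiusConv (MobiusAux.rinv μ) μ f
        = mobiusConv (MobiusAux.linv μ) μ f :=
          (MobiusAux.conv_congr_left hlr f).symm
      _ = mobiusDelta C A f := MobiusAux.linv_conv hC hμ hμ1 f
end
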